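/- Let G be a group and A a nilpotent normal subgroup such that G/A is nilpotent (i.e., G is metanilpotent in this sense). Then abnormality is transitive in G: if B is abnormal in G and H is abnormal in B, then H is abnormal in G. -/

import Mathlib

/-- The conjugate subgroup `H^g = g⁻¹Hg`. -/
def conjSub {G : Type*} [Group G] (g : G) (H : Subgroup G) : Subgroup G :=
  H.map (MulAut.conj g⁻¹).toMonoidHom

/-- `H` is abnormal in `G`: `g ∈ ⟨H, H^g⟩` for every `g ∈ G`. -/
def IsAbnormal {G : Type*} [Group G] (H : Subgroup G) : Prop :=
  ∀ g : G, g ∈ H ⊔ conjSub g H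

/-- `H` is abnormal in the subgroup `B`: `H ≤ B` and `g ∈ ⟨H, H^g⟩` for every `g ∈ B`. -/
def IsAbnormalIn {G : Type*} [Group G] (H B : Subgroup G) : Prop :=
  H ≤ B ∧ ∀ g ∈ B, g ∈ H ⊔ conjSub g H

/-!
Since `G/A` is nilpotent, the images of `B` in `G/A` and of `H` in `B/(B ∩ A)` are abnormal in
nilpotent groups, hence the whole group; so `HA = BA = G`. We then induct on the class of `A`.
Let `K` be the centre of `A`: an abelian normal subgroup of `G` centralised by `A`, and by
induction `g ∈ ⟨H, H^g⟩K` for all `g`. As `G = HA` and `H^{hc} = H^c`, it suffices to treat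
`c ∈ A`. Put `J = ⟨H, H^c⟩` and write `c = dz` with `d ∈ J`, `z ∈ K`; since `d` commutes with
`z`, `H^z ≤ J`. Because `H` normalises `J` and `A` centralises `K`, `K ∩ J` is normal and
`B^z ≤ B(K ∩ J)`, so the abnormality of `B` gives `z = bw` with `b ∈ B`, `w ∈ K ∩ J`. Then
`H^b ≤ J`, so `b ∈ ⟨H, H^b⟩ ≤ J` by the abnormality of `H` in `B`, whence `z ∈ J` and `c ∈ J`.
-/

open Subgroup

section Conjugation

variable {G G' : Type*} [Group G] [Group G']

theorem mem_conjSub {g x : G} {H : Subgroup G} : x ∈ conjSub g H ↔ g * x * g⁻¹ ∈ H := by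
  constructor
  · rintro ⟨h, hh, rfl⟩
    simpa [mul_assoc] using hh
  · intro hx
    exact ⟨g * x * g⁻¹, hx, by simp [mul_assoc]⟩

theorem conjSub_le_iff {g : G} {H J : Subgroup G} :
    conjSub g H ≤ J ↔ ∀ h ∈ H, g⁻¹ * h * g ∈ J := by
  simp [conjSub, SetLike.le_def]

theorem conjSub_mul_of_mem {h : G} (g : G) {H : Subgroup G} (hh : h ∈ H) :
    conjSub (h * g) H = conjSub g H := by
  ext x
  rw [mem_conjSub, mem_conjSub, mul_inv_rev, show h * g * x * (g⁻¹ * h⁻¹) =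
    h * (g * x * g⁻¹) * h⁻¹ by group, H.mul_mem_cancel_right (H.inv_mem hh),
    H.mul_mem_cancel_left hh]

theorem map_conjSub (f : G →* G') (g : G) (H : Subgroup G) :
    (conjSub g H).map f = conjSub (f g) (H.map f) := by
  simp only [conjSub, map_map]
  congr 1
  ext x
  simp

end Conjugation

section Abnormal

variable {G G' : Type*} [Group G] [Group G'] {H B : Subgroup G}

theorem isAbnormalIn_top_iff : IsAbnormalIn H ⊤ ↔ IsAbnormal H := by
  simp [IsAbnormalIn, IsAbnormal]

theorem IsAbnormalIn.map (hH : IsAbnormalIn H B) (f : G →* G') :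
    IsAbnormalIn (H.map f) (B.map f) := by
  refine ⟨map_mono hH.1, ?_⟩
  rintro _ ⟨b, hb, rfl⟩
  simpa only [Subgroup.map_sup, map_conjSub] using mem_map_of_mem f (hH.2 b hb)

theorem IsAbnormal.map (hH : IsAbnormal H) {f : G →* G'} (hf : Function.Surjective f) :
    IsAbnormal (H.map f) := by
  rw [← isAbnormalIn_top_iff, ← map_top_of_surjective f hf]
  exact (isAbnormalIn_top_iff.mpr hH).map f

theorem IsAbnormal.mem_sup_conjSub_sup_ker {f : G →* G'} (hH : IsAbnormal (H.map f)) (g : G) :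
    g ∈ H ⊔ conjSub g H ⊔ f.ker := by
  rw [← comap_map_eq, mem_comap, Subgroup.map_sup, map_conjSub]
  exact hH (f g)

theorem IsAbnormalIn.isAbnormal_subgroupOf (hH : IsAbnormalIn H B) :
    IsAbnormal (H.subgroupOf B) := by
  intro x
  have hmap : (H.subgroupOf B ⊔ conjSub x (H.subgroupOf B)).map B.subtype
      = H ⊔ conjSub ↑x H := by
    simp only [Subgroup.map_sup, map_conjSub, subgroupOf_map_subtype, inf_eq_left.mpr hH.1,
      coe_subtype]
  have hx := hH.2 x x.2
  rw [← hmap] at hx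
  obtain ⟨y, hy, hyx⟩ := hx
  obtain rfl : y = x := B.subtype_injective hyx
  exact hy

theorem IsAbnormal.eq_top [Group.IsNilpotent G] (hH : IsAbnormal H) : H = ⊤ := by
  refine normalizerCondition_iff_only_full_group_self_normalizing.mp
    Group.normalizerCondition_of_isNilpotent H (le_antisymm (fun g hg => ?_) le_normalizer)
  have hconj : conjSub g H = H := by
    ext x
    rw [mem_conjSub]
    exact (mem_normalizer_iff.mp hg x).symm
  simpa [hconj] using hH g

theorem IsAbnormalIn.eq_of_isNilpotent [Group.IsNilpotent G] (hH : IsAbnormalIn H B) : H = B :=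
  le_antisymm hH.1 (subgroupOf_eq_top.mp hH.isAbnormal_subgroupOf.eq_top)

theorem IsAbnormalIn.sup_ker_eq (hH : IsAbnormalIn H B) (f : G →* G') [Group.IsNilpotent G'] :
    H ⊔ f.ker = B ⊔ f.ker :=
  map_eq_map_iff.mp (hH.map f).eq_of_isNilpotent

end Abnormal

section CentralizerSupplement

variable {G : Type*} [Group G] {H B J K : Subgroup G} [K.Normal]

theorem exists_mul_eq_of_sup_centralizer_eq_top (hHK : H ⊔ centralizer K = ⊤) (g : G) :
    ∃ h ∈ H, ∃ c ∈ centralizer K, h * c = g :=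
  mem_sup_of_normal_right.mp (hHK ▸ mem_top g)

theorem normal_inf_of_sup_centralizer_eq_top (hHK : H ⊔ centralizer K = ⊤) (hHJ : H ≤ J) :
    (K ⊓ J).Normal := by
  constructor
  rintro w ⟨hwK, hwJ⟩ g
  obtain ⟨h, hh, c, hc, rfl⟩ := exists_mul_eq_of_sup_centralizer_eq_top hHK g
  have hcw : c * w * c⁻¹ = w := by rw [← mem_centralizer_iff.mp hc w hwK]; group
  rw [show h * c * w * (h * c)⁻¹ = h * (c * w * c⁻¹) * h⁻¹ by group, hcw]
  exact ⟨Normal.conj_mem inferInstance w hwK h,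
    J.mul_mem (J.mul_mem (hHJ hh) hwJ) (J.inv_mem (hHJ hh))⟩

theorem conjSub_le_sup_inf (hHK : H ⊔ centralizer K = ⊤) (hHJ : H ≤ J) {z : G} (hz : z ∈ K)
    (hzJ : conjSub z H ≤ J) (X : Subgroup G) : conjSub z X ≤ X ⊔ (K ⊓ J) := by
  refine conjSub_le_iff.mpr fun x hx => ?_
  obtain ⟨h, hh, c, hc, rfl⟩ := exists_mul_eq_of_sup_centralizer_eq_top hHK x
  have huK : h⁻¹ * z⁻¹ * h * z ∈ K :=
    K.mul_mem (by simpa using Normal.conj_mem inferInstance z⁻¹ (K.inv_mem hz) h⁻¹) hz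
  have huJ : h⁻¹ * z⁻¹ * h * z ∈ J := by
    simpa only [mul_assoc] using J.mul_mem (J.inv_mem (hHJ hh)) (conjSub_le_iff.mp hzJ h hh)
  have hcomm : z⁻¹ * (h * c) * z = h * c * (h⁻¹ * z⁻¹ * h * z) := by
    calc z⁻¹ * (h * c) * z = z⁻¹ * h * (z * c) := by rw [mem_centralizer_iff.mp hc z hz]; group
      _ = h * ((h⁻¹ * z⁻¹ * h * z) * c) := by group
      _ = h * c * (h⁻¹ * z⁻¹ * h * z) := by rw [mem_centralizer_iff.mp hc _ huK]; group
  rw [hcomm]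
  exact mul_mem_sup hx ⟨huK, huJ⟩

theorem mem_of_conjSub_le (hHK : H ⊔ centralizer K = ⊤) (hB : IsAbnormal B)
    (hH : IsAbnormalIn H B) (hHJ : H ≤ J) {z : G} (hz : z ∈ K) (hzJ : conjSub z H ≤ J) :
    z ∈ J := by
  have := normal_inf_of_sup_centralizer_eq_top hHK hHJ
  have hzBD : z ∈ B ⊔ (K ⊓ J) := sup_le le_sup_left (conjSub_le_sup_inf hHK hHJ hz hzJ B) (hB z)
  obtain ⟨b, hb, w, ⟨-, hwJ⟩, rfl⟩ := mem_sup_of_normal_right.mp hzBD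
  have hbJ : conjSub b H ≤ J := conjSub_le_iff.mpr fun h hh => by
    rw [show b⁻¹ * h * b = w * ((b * w)⁻¹ * h * (b * w)) * w⁻¹ by group]
    exact J.mul_mem (J.mul_mem hwJ (conjSub_le_iff.mp hzJ h hh)) (J.inv_mem hwJ)
  exact J.mul_mem (sup_le hHJ hbJ (hH.2 b hb)) hwJ

theorem isAbnormal_of_forall_mem_sup_conjSub_sup (hKK : K ≤ centralizer K)
    (hHK : H ⊔ centralizer K = ⊤) (hB : IsAbnormal B) (hH : IsAbnormalIn H B)
    (hmod : ∀ g, g ∈ H ⊔ conjSub g H ⊔ K) : IsAbnormal H := by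
  intro g
  obtain ⟨h, hh, c, hc, rfl⟩ := exists_mul_eq_of_sup_centralizer_eq_top hHK g
  rw [conjSub_mul_of_mem c hh]
  set J := H ⊔ conjSub c H
  refine J.mul_mem (mem_sup_left hh) ?_
  obtain ⟨d, hd, z, hz, rfl⟩ := mem_sup_of_normal_right.mp (hmod c)
  have hdz : z * d = d * z := by
    have hd' : d ∈ centralizer K := by simpa using mul_mem hc (inv_mem (hKK hz))
    exact mem_centralizer_iff.mp hd' z hz
  have hzJ : conjSub z H ≤ J := conjSub_le_iff.mpr fun h' hh' => by
    rw [show z⁻¹ * h' * z = d * ((d * z)⁻¹ * h' * (d * z)) * d⁻¹ by rw [← hdz]; group]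
    exact J.mul_mem (J.mul_mem hd (mem_sup_right (conjSub_le_iff.mp le_rfl h' hh')))
      (J.inv_mem hd)
  exact J.mul_mem hd (mem_of_conjSub_le hHK hB hH le_sup_left hz hzJ)

end CentralizerSupplement

theorem nilpotencyClass_le_of_center_le_ker {N Q : Type*} [Group N] [Group Q]
    [Group.IsNilpotent N] {f : N →* Q} (hf : Function.Surjective f) (hker : center N ≤ f.ker) :
    Group.nilpotencyClass Q ≤ Group.nilpotencyClass N - 1 :=
  Group.nilpotencyClass_quotient_center (G := N) ▸ Group.nilpotencyClass_le_of_surjective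
    (QuotientGroup.lift _ f hker) (QuotientGroup.lift_surjective_of_surjective _ f hf hker)

section Metanilpotent

variable {G : Type*} [Group G] {H B : Subgroup G}

theorem IsAbnormalIn.sup_eq_top (hH : IsAbnormalIn H B) (hB : IsAbnormal B) (N : Subgroup G)
    [N.Normal] [Group.IsNilpotent (G ⧸ N)] : H ⊔ N = ⊤ := by
  have hBN := (isAbnormalIn_top_iff.mpr hB).sup_ker_eq (QuotientGroup.mk' N)
  rwa [top_sup_eq, ← hH.sup_ker_eq, QuotientGroup.ker_mk'] at hBN

theorem IsAbnormalIn.isAbnormal_of_sup_eq_top {A : Subgroup G} [A.Normal] [Group.IsNilpotent A]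
    (hH : IsAbnormalIn H B) (hB : IsAbnormal B) (hHA : H ⊔ A = ⊤) : IsAbnormal H := by
  obtain ⟨n, hn⟩ : ∃ n, Group.nilpotencyClass A ≤ n := ⟨_, le_rfl⟩
  induction n generalizing G with
  | zero =>
    have : Subsingleton A := Group.nilpotencyClass_zero_iff_subsingleton.mp (Nat.le_zero.mp hn)
    rw [A.eq_bot_of_subsingleton, sup_bot_eq] at hHA
    exact fun g => mem_sup_left (hHA ▸ mem_top g)
  | succ n ih =>
    set K := A ⊓ centralizer A
    have hAK : A ≤ centralizer K := le_centralizer_iff.mpr inf_le_right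
    set π := QuotientGroup.mk' K
    have hπ : Function.Surjective π := QuotientGroup.mk'_surjective K
    have : (A.map π).Normal := ‹A.Normal›.map π hπ
    have : Group.IsNilpotent (A.map π) :=
      Group.nilpotent_of_surjective _ (π.subgroupMap_surjective A)
    have hker : center A ≤ (π.subgroupMap A).ker := fun z hz => Subtype.ext <|
      (QuotientGroup.eq_one_iff _).mpr ⟨z.2, mem_centralizer_iff.mpr fun a ha =>
        congrArg Subtype.val (mem_center_iff.mp hz ⟨a, ha⟩)⟩
    have hclass := nilpotencyClass_le_of_center_le_ker (π.subgroupMap_surjective A) hker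
    have hHAπ : H.map π ⊔ A.map π = ⊤ := by
      rw [← Subgroup.map_sup, hHA, map_top_of_surjective π hπ]
    have hmod := (ih (hH.map π) (hB.map hπ) hHAπ (by omega)).mem_sup_conjSub_sup_ker
    refine isAbnormal_of_forall_mem_sup_conjSub_sup (K := K) (hAK.trans' inf_le_left)
      (eq_top_mono (sup_le_sup_left hAK H) hHA) hB hH fun g => ?_
    simpa only [π, QuotientGroup.ker_mk'] using hmod g

end Metanilpotent

theorem abnormality_transitive_metanilpotent {G : Type*} [Group G]
    (A : Subgroup G) [A.Normal] [Group.IsNilpotent A] [Group.IsNilpotent (G ⧸ A)]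
    (B H : Subgroup G) (hB : IsAbnormal B) (hH : IsAbnormalIn H B) :
    IsAbnormal H :=
  hH.isAbnormal_of_sup_eq_top hB (hH.sup_eq_top hB A)
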